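/- arXiv:1808.06712 — 2 statements merged into one kernel-verified Lean document; each statement's English description precedes it below -/
import Mathlib

section
/- Let X be a topological space with t_γⁿ(X) ≤ κ for an infinite cardinal κ. If H ⊆ X satisfies H = ⋃{cl_γⁿ(A) : A ⊆ H, |A| ≤ κ}, then H is n-γ-closed, i.e., cl_γⁿ(H) = H. -/
open Set Topology Cardinal

universe u v

def thetaCl (X : Type u) [TopologicalSpace X] (A : Set X) : Set X :=
  {x | ∀ U : Set X, IsOpen U → x ∈ U → (closure U ∩ A).Nonempty}

def thetaClN (X : Type u) [TopologicalSpace X] (n : ℕ) (A : Set X) : Set X :=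
  (thetaCl X)^[n] A

def gammaCl (X : Type u) [TopologicalSpace X] (n : ℕ) (A : Set X) : Set X :=
  {x | ∀ U : Set X, IsOpen U → x ∈ U → (thetaClN X n U ∩ A).Nonempty}

def ThetaUrysohn (X : Type u) [TopologicalSpace X] (n : ℕ) : Prop :=
  ∀ x y : X, x ≠ y → ∃ U V : Set X, IsOpen U ∧ IsOpen V ∧ x ∈ U ∧ y ∈ V ∧
    thetaClN X n U ∩ thetaClN X n V = ∅

/-!
Every θ-closure, hence every iterate `cl_θⁿ`, is extensive, so `U ⊆ cl_θⁿ(U)` and `cl_γⁿ` is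
extensive as well: `H ⊆ cl_γⁿ(H)`. Conversely, by `n`-γ-tightness a point of `cl_γⁿ(H)` already
lies in `cl_γⁿ(B)` for some `B ⊆ H` with `|B| ≤ κ`, and such closures make up `H`.
-/

section Extensive

variable (X : Type u) [TopologicalSpace X]

theorem subset_thetaCl (A : Set X) : A ⊆ thetaCl X A :=
  fun x hx _ _ hxU => ⟨x, subset_closure hxU, hx⟩

theorem subset_thetaClN (n : ℕ) (A : Set X) : A ⊆ thetaClN X n A :=
  Function.id_le_iterate_of_id_le (subset_thetaCl X) n A

theorem subset_gammaCl (n : ℕ) (A : Set X) : A ⊆ gammaCl X n A :=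
  fun x hx U _ hxU => ⟨x, subset_thetaClN X n U hxU, hx⟩

end Extensive

theorem gammaClosed_of_union_general (X : Type u) [TopologicalSpace X] (n : ℕ) (κ : Cardinal.{u})
    (ht : ∀ (x : X) (A : Set X), x ∈ gammaCl X n A →
      ∃ B ⊆ A, #B ≤ κ ∧ x ∈ gammaCl X n B)
    (H : Set X)
    (hH : H = ⋃₀ {C | ∃ A : Set X, A ⊆ H ∧ #A ≤ κ ∧ C = gammaCl X n A}) :
    gammaCl X n H = H := by
  refine Subset.antisymm (fun x hx => ?_) (subset_gammaCl X n H)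
  obtain ⟨B, hBH, hBκ, hxB⟩ := ht x H hx
  rw [hH]
  exact ⟨gammaCl X n B, ⟨B, hBH, hBκ, rfl⟩, hxB⟩

theorem gammaClosed_of_union (X : Type u) [TopologicalSpace X] (n : ℕ) (κ : Cardinal.{u})
    (hκ : ℵ₀ ≤ κ)
    (ht : ∀ (x : X) (A : Set X), x ∈ gammaCl X n A →
      ∃ B ⊆ A, #B ≤ κ ∧ x ∈ gammaCl X n B)
    (H : Set X)
    (hH : H = ⋃₀ {C | ∃ A : Set X, A ⊆ H ∧ #A ≤ κ ∧ C = gammaCl X n A}) :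
    gammaCl X n H = H :=
  gammaClosed_of_union_general X n κ ht H hH
end

section
/- For every topological space X and every n ≥ 1, the n-γ-tightness of X is at most the character of X: t_γⁿ(X) ≤ χ(X). -/
open Set Topology Cardinal

universe u v

noncomputable def tGamma (X : Type u) [TopologicalSpace X] (n : ℕ) : Cardinal.{u} :=
  sInf {κ | ∀ (x : X) (A : Set X), x ∈ gammaCl X n A →
    ∃ B ⊆ A, #B ≤ κ ∧ x ∈ gammaCl X n B}

noncomputable def charX (X : Type u) [TopologicalSpace X] : Cardinal.{u} :=
  ⨆ x : X, sInf {κ | ∃ B : Set (Set X), #B ≤ κ ∧ (∀ U ∈ B, IsOpen U ∧ x ∈ U) ∧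
    ∀ V : Set X, IsOpen V → x ∈ V → ∃ U ∈ B, U ⊆ V}

lemma thetaCl_mono (X : Type u) [TopologicalSpace X] : Monotone (thetaCl X) :=
  fun _ _ hAB _ hx U hU hxU => (hx U hU hxU).mono (inter_subset_inter_right _ hAB)

lemma thetaClN_mono (X : Type u) [TopologicalSpace X] (n : ℕ) :
    Monotone (thetaClN X n) :=
  (thetaCl_mono X).iterate n

lemma exists_subset_card_le_mem_gammaCl {X : Type u} [TopologicalSpace X] {n : ℕ} {x : X}
    {A : Set X} (hxA : x ∈ gammaCl X n A) {B : Set (Set X)} (hBopen : ∀ U ∈ B, IsOpen U ∧ x ∈ U)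
    (hBbase : ∀ V : Set X, IsOpen V → x ∈ V → ∃ U ∈ B, U ⊆ V) :
    ∃ C ⊆ A, #C ≤ #B ∧ x ∈ gammaCl X n C := by
  have hpick : ∀ U : B, (thetaClN X n (U : Set X) ∩ A).Nonempty :=
    fun U => hxA U (hBopen U U.2).1 (hBopen U U.2).2
  choose f hf using hpick
  refine ⟨range f, range_subset_iff.2 fun U => (hf U).2, mk_range_le, ?_⟩
  intro V hV hxV
  obtain ⟨U, hU, hUV⟩ := hBbase V hV hxV
  exact ⟨f ⟨U, hU⟩, thetaClN_mono X n hUV (hf ⟨U, hU⟩).1, mem_range_self _⟩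

lemma exists_localBase_card_le_charX {X : Type u} [TopologicalSpace X] (x : X) :
    ∃ B : Set (Set X), #B ≤ charX X ∧ (∀ U ∈ B, IsOpen U ∧ x ∈ U) ∧
      ∀ V : Set X, IsOpen V → x ∈ V → ∃ U ∈ B, U ⊆ V := by
  set S := {κ | ∃ B : Set (Set X), #B ≤ κ ∧ (∀ U ∈ B, IsOpen U ∧ x ∈ U) ∧
    ∀ V : Set X, IsOpen V → x ∈ V → ∃ U ∈ B, U ⊆ V}
  have hS : S.Nonempty :=
    ⟨_, {U | IsOpen U ∧ x ∈ U}, le_rfl, fun _ hU => hU, fun V hV hxV => ⟨V, ⟨hV, hxV⟩, le_rfl⟩⟩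
  obtain ⟨B, hBcard, hB⟩ := csInf_mem hS
  exact ⟨B, hBcard.trans (le_ciSup bddAbove_of_small x), hB⟩

theorem tGamma_le_char_general (X : Type u) [TopologicalSpace X] (n : ℕ) :
    tGamma X n ≤ charX X := by
  refine csInf_le (OrderBot.bddBelow _) fun x A hxA => ?_
  obtain ⟨B, hBcard, hBopen, hBbase⟩ := exists_localBase_card_le_charX x
  obtain ⟨C, hCA, hCcard, hxC⟩ := exists_subset_card_le_mem_gammaCl hxA hBopen hBbase
  exact ⟨C, hCA, hCcard.trans hBcard, hxC⟩

theorem tGamma_le_char (X : Type u) [TopologicalSpace X] (n : ℕ) (hn : 1 ≤ n) :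
    tGamma X n ≤ charX X :=
  tGamma_le_char_general X n
end
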